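/- Let A be a symmetric positive definite n×n real matrix with ‖I − A‖ < 1. Then the scalarized Newton–Schulz iteration z_{k+1} = ½ z_k (3 − a z_k²) applied to each eigenvalue a of A, started at z₀ = 1, converges to a^{-1/2}; consequently Z_k → A^{-1/2} for the matrix iteration Y₀ = A, Z₀ = I, T_k = 3I − Z_kY_k, Y_{k+1} = ½Y_kT_k, Z_{k+1} = ½T_kZ_k. -/

import Mathlib

/-!
Write `A = U diag(λ) Uᵀ`. The map `d ↦ U diag(d) Uᵀ` is an `ℝ`-algebra homomorphism
`ℝⁿ → Mₙ(ℝ)` sending `λ` to `A`, and one Newton–Schulz step commutes with every algebra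
homomorphism. Hence `Z_k = U diag(z_k(λ₁), …, z_k(λₙ)) Uᵀ`, where `z_k(a)` is the scalar
iteration, and `‖I - A‖ < 1` gives `|1 - λᵢ| < 1` for every eigenvalue.

For the scalar iteration with `q = |1 - a| < 1`, the residual `e_k = 1 - a z_k²` satisfies
`e_{k+1} = e_k² (3 + e_k) / 4`, so `|e_{k+1}| ≤ r |e_k|` with `r = q (3 + q) / 4 < 1`; thus
`a z_k² → 1` with `z_k > 0`, i.e. `z_k → a^{-1/2}`. Finally `U diag(√λ) Uᵀ` is a positive
semidefinite square root of `A`, so it is `S` by uniqueness, and the limit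
`U diag(λ^{-1/2}) Uᵀ` is `S⁻¹`.
-/

open Matrix Filter

/-- Operator norm of a real matrix, induced by Euclidean norms. -/
noncomputable def opNorm {m n : ℕ} (A : Matrix (Fin m) (Fin n) ℝ) : ℝ :=
  ‖LinearMap.toContinuousLinearMap (Matrix.toEuclideanLin A)‖

open Topology

section NewtonSchulz

variable {R M : Type*} [Ring R] [Algebra ℝ R] [Ring M] [Algebra ℝ M]

noncomputable def newtonSchulzStep (p : R × R) : R × R :=
  ((1 / 2 : ℝ) • (p.1 * (3 • 1 - p.2 * p.1)), (1 / 2 : ℝ) • ((3 • 1 - p.2 * p.1) * p.2))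

theorem newtonSchulzStep_iterate_eq {a : R} {Y Z : ℕ → R} (hY0 : Y 0 = a) (hZ0 : Z 0 = 1)
    (hY : ∀ k, Y (k + 1) = (1 / 2 : ℝ) • (Y k * (3 • 1 - Z k * Y k)))
    (hZ : ∀ k, Z (k + 1) = (1 / 2 : ℝ) • ((3 • 1 - Z k * Y k) * Z k)) (k : ℕ) :
    newtonSchulzStep^[k] (a, 1) = (Y k, Z k) := by
  induction k with
  | zero => simp [hY0, hZ0]
  | succ k ih => rw [Function.iterate_succ_apply', ih, hY, hZ]; rfl

theorem AlgHom.semiconj_newtonSchulzStep (φ : R →ₐ[ℝ] M) :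
    Function.Semiconj (Prod.map φ φ) newtonSchulzStep newtonSchulzStep := fun p => by
  simp [newtonSchulzStep, map_ofNat]

theorem AlgHom.map_newtonSchulzStep_iterate (φ : R →ₐ[ℝ] M) (a : R) (k : ℕ) :
    Prod.map φ φ (newtonSchulzStep^[k] (a, 1)) = newtonSchulzStep^[k] (φ a, 1) := by
  simpa using φ.semiconj_newtonSchulzStep.iterate_right k (a, 1)

theorem newtonSchulzStep_iterate_snd_apply {ι : Type*} (a : ι → ℝ) (k : ℕ) (i : ι) :
    (newtonSchulzStep^[k] (a, 1)).2 i = (newtonSchulzStep^[k] (a i, 1)).2 :=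
  congrArg Prod.snd ((Pi.evalAlgHom ℝ (fun _ => ℝ) i).map_newtonSchulzStep_iterate a k)

end NewtonSchulz

theorem newtonSchulzStep_iterate_fst {R : Type*} [CommRing R] [Algebra ℝ R] (a : R) (k : ℕ) :
    (newtonSchulzStep^[k] (a, 1)).1 = a * (newtonSchulzStep^[k] (a, 1)).2 := by
  induction k with
  | zero => simp
  | succ k ih =>
    simp only [Function.iterate_succ_apply', newtonSchulzStep, ih, mul_smul_comm]
    ring_nf

theorem newtonSchulzStep_iterate_snd_succ (a : ℝ) (k : ℕ) :
    (newtonSchulzStep^[k + 1] (a, 1)).2 =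
      1 / 2 * (newtonSchulzStep^[k] (a, 1)).2 * (3 - a * (newtonSchulzStep^[k] (a, 1)).2 ^ 2) := by
  rw [Function.iterate_succ_apply', newtonSchulzStep, newtonSchulzStep_iterate_fst, smul_eq_mul]
  ring

theorem abs_sq_mul_three_add_div_four_le {e q : ℝ} (he : |e| ≤ q) :
    |e ^ 2 * (3 + e) / 4| ≤ q * (3 + q) / 4 * |e| := by
  have h3 : |3 + e| ≤ 3 + q := (abs_add_le _ _).trans (by norm_num [he])
  rw [abs_div, abs_mul, abs_pow, sq, abs_of_pos (by norm_num : (0 : ℝ) < 4)]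
  have : |e| * |e| * |3 + e| ≤ q * |e| * (3 + q) := by
    gcongr
    exact mul_nonneg ((abs_nonneg e).trans he) (abs_nonneg e)
  linarith

theorem tendsto_one_div_sqrt_of_mul_sq {α : Type*} {l : Filter α} {a : ℝ} {z : α → ℝ}
    (ha : 0 < a) (hz : ∀ k, 0 < z k) (h : Tendsto (fun k => a * z k ^ 2) l (𝓝 1)) :
    Tendsto z l (𝓝 (1 / √a)) := by
  have hz_eq : ∀ k, √(a * z k ^ 2) / √a = z k := fun k => by
    rw [Real.sqrt_mul ha.le, Real.sqrt_sq (hz k).le,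
      mul_div_cancel_left₀ _ (Real.sqrt_ne_zero'.mpr ha)]
  simpa [hz_eq] using (h.sqrt).div_const √a

theorem tendsto_one_div_sqrt_of_newtonSchulz {a : ℝ} (ha : |1 - a| < 1) {z : ℕ → ℝ}
    (h0 : z 0 = 1) (hrec : ∀ k, z (k + 1) = 1 / 2 * z k * (3 - a * z k ^ 2)) :
    Tendsto z atTop (𝓝 (1 / √a)) := by
  set q := |1 - a|
  set r := q * (3 + q) / 4
  set e : ℕ → ℝ := fun k => 1 - a * z k ^ 2
  have hq : 0 ≤ q := abs_nonneg _
  have hr0 : 0 ≤ r := by positivity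
  have hr1 : r < 1 := by simp only [r]; nlinarith
  have he_succ : ∀ k, e (k + 1) = e k ^ 2 * (3 + e k) / 4 := fun k => by
    simp only [e, hrec]; ring
  have he_le : ∀ k, |e k| ≤ q := by
    intro k
    induction k with
    | zero => simp [e, h0, q]
    | succ k ih =>
      calc |e (k + 1)| ≤ r * |e k| := he_succ k ▸ abs_sq_mul_three_add_div_four_le ih
        _ ≤ 1 * q := by gcongr
        _ = q := one_mul q
  have he_contract : ∀ k, |e (k + 1)| ≤ r * |e k| := fun k =>
    he_succ k ▸ abs_sq_mul_three_add_div_four_le (he_le k)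
  have he_geom : ∀ k, |e k| ≤ r ^ k * |e 0| := fun k =>
    le_geom (u := fun k => |e k|) hr0 k fun j _ => he_contract j
  have he_lim : Tendsto e atTop (𝓝 0) := squeeze_zero_norm he_geom
    (by simpa using (tendsto_pow_atTop_nhds_zero_of_lt_one hr0 hr1).mul_const |e 0|)
  have hz_pos : ∀ k, 0 < z k := by
    intro k
    induction k with
    | zero => simp [h0]
    | succ k ih =>
      have : -1 < e k := (abs_lt.mp ((he_le k).trans_lt ha)).1
      rw [hrec]
      have : 0 < 3 - a * z k ^ 2 := by simp only [e] at this; linarith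
      positivity
  have ha0 : 0 < a := by linarith [(abs_lt.mp ha).2]
  refine tendsto_one_div_sqrt_of_mul_sq ha0 hz_pos ?_
  simpa [e] using (tendsto_const_nhds (x := (1 : ℝ))).sub he_lim

namespace Matrix

variable {ι : Type*} [Fintype ι] [DecidableEq ι] {A S : Matrix ι ι ℝ}

noncomputable def IsHermitian.conjDiag (hA : A.IsHermitian) : (ι → ℝ) →ₐ[ℝ] Matrix ι ι ℝ :=
  (Unitary.conjStarAlgAut ℝ _ hA.eigenvectorUnitary : Matrix ι ι ℝ →ₐ[ℝ] Matrix ι ι ℝ).comp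
    (diagonalAlgHom ℝ)

theorem IsHermitian.conjDiag_apply (hA : A.IsHermitian) (d : ι → ℝ) :
    hA.conjDiag d = hA.eigenvectorUnitary * diagonal d * star hA.eigenvectorUnitary := rfl

theorem IsHermitian.conjDiag_eigenvalues (hA : A.IsHermitian) :
    hA.conjDiag hA.eigenvalues = A := by
  conv_rhs => rw [hA.spectral_theorem]
  simp [conjDiag, RCLike.ofReal_real_eq_id]

theorem IsHermitian.continuous_conjDiag (hA : A.IsHermitian) : Continuous hA.conjDiag :=
  hA.conjDiag.toLinearMap.continuous_of_finiteDimensional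

theorem IsHermitian.posSemidef_conjDiag (hA : A.IsHermitian) {d : ι → ℝ} (hd : 0 ≤ d) :
    (hA.conjDiag d).PosSemidef := by
  simpa [conjDiag_apply, star_eq_conjTranspose] using
    (posSemidef_diagonal_iff.mpr hd).mul_mul_conjTranspose_same
      (hA.eigenvectorUnitary : Matrix ι ι ℝ)

theorem PosSemidef.conjDiag_sqrt_eq (hA : A.PosSemidef) (hS : S.PosSemidef)
    (hSsq : S * S = A) :
    hA.isHermitian.conjDiag (fun i => √(hA.isHermitian.eigenvalues i)) = S := by
  open scoped MatrixOrder in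
  refine (CFC.mul_self_eq_mul_self_iff _ S (IsHermitian.posSemidef_conjDiag hA.isHermitian
    fun i => Real.sqrt_nonneg _).nonneg hS.nonneg).mp ?_
  rw [hSsq, ← map_mul]
  conv_rhs => rw [← IsHermitian.conjDiag_eigenvalues hA.isHermitian]
  congr 1
  ext i
  exact Real.mul_self_sqrt (hA.eigenvalues_nonneg i)

theorem PosDef.inv_eq_conjDiag (hA : A.PosDef) (hS : S.PosSemidef) (hSsq : S * S = A) :
    S⁻¹ = hA.isHermitian.conjDiag (fun i => 1 / √(hA.isHermitian.eigenvalues i)) := by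
  refine inv_eq_left_inv ?_
  rw [← hA.posSemidef.conjDiag_sqrt_eq hS hSsq, ← map_mul, ← map_one hA.isHermitian.conjDiag]
  congr 1
  ext i
  have := Real.sqrt_pos.mpr (hA.eigenvalues_pos i)
  simp [this.ne']

end Matrix

theorem abs_le_opNorm_of_mulVec_eq_smul {n : ℕ} (M : Matrix (Fin n) (Fin n) ℝ) {a : ℝ}
    {v : Fin n → ℝ} (hv : v ≠ 0) (h : M *ᵥ v = a • v) : |a| ≤ opNorm M := by
  have hv' : WithLp.toLp 2 v ≠ 0 := by simpa using hv
  refine le_of_mul_le_mul_right ?_ (norm_pos_iff.mpr hv')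
  calc |a| * ‖WithLp.toLp 2 v‖ = ‖toEuclideanLin M (WithLp.toLp 2 v)‖ := by
        simp [h, norm_smul]
    _ ≤ opNorm M * ‖WithLp.toLp 2 v‖ :=
        (LinearMap.toContinuousLinearMap (toEuclideanLin M)).le_opNorm _

theorem stmt12_general {n : ℕ} (A : Matrix (Fin n) (Fin n) ℝ)
    (hpd : A.PosDef) (hnorm : opNorm (1 - A) < 1)
    (S : Matrix (Fin n) (Fin n) ℝ) (hS : S.PosDef) (hSsq : S * S = A) :
    (∀ a : ℝ, Module.End.HasEigenvalue (Matrix.toLin' A) a →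
      ∀ z : ℕ → ℝ, z 0 = 1 → (∀ k, z (k + 1) = (1 / 2) * z k * (3 - a * z k ^ 2)) →
        Tendsto z atTop (nhds (1 / Real.sqrt a))) ∧
    (∀ Y Z : ℕ → Matrix (Fin n) (Fin n) ℝ,
      Y 0 = A → Z 0 = 1 →
      (∀ k, Y (k + 1) =
        (1 / 2 : ℝ) • (Y k * (3 • (1 : Matrix (Fin n) (Fin n) ℝ) - Z k * Y k))) →
      (∀ k, Z (k + 1) =
        (1 / 2 : ℝ) • ((3 • (1 : Matrix (Fin n) (Fin n) ℝ) - Z k * Y k) * Z k)) →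
      Tendsto Z atTop (nhds S⁻¹)) := by
  have hspec {a : ℝ} {v : Fin n → ℝ} (hv : v ≠ 0) (h : A *ᵥ v = a • v) : |1 - a| < 1 := by
    refine (abs_le_opNorm_of_mulVec_eq_smul (1 - A) hv ?_).trans_lt hnorm
    rw [sub_mulVec, one_mulVec, h, sub_smul, one_smul]
  refine ⟨fun a ha z h0 hrec => ?_, fun Y Z hY0 hZ0 hY hZ => ?_⟩
  · obtain ⟨v, hv⟩ := ha.exists_hasEigenvector
    exact tendsto_one_div_sqrt_of_newtonSchulz
      (hspec hv.2 (by simpa [toLin'_apply] using hv.apply_eq_smul)) h0 hrec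
  · set hA := hpd.isHermitian
    set d := fun k => (newtonSchulzStep^[k] (hA.eigenvalues, 1)).2
    have hZ_eq : ∀ k, Z k = hA.conjDiag (d k) := fun k => by
      have := hA.conjDiag.map_newtonSchulzStep_iterate hA.eigenvalues k
      rw [hA.conjDiag_eigenvalues, newtonSchulzStep_iterate_eq hY0 hZ0 hY hZ] at this
      exact congrArg Prod.snd this.symm
    have hd_lim : Tendsto d atTop (𝓝 fun i => 1 / √(hA.eigenvalues i)) := by
      refine tendsto_pi_nhds.mpr fun i => ?_
      simp only [d, newtonSchulzStep_iterate_snd_apply]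
      have hv : (hA.eigenvectorBasis i : Fin n → ℝ) ≠ 0 := by
        simpa using hA.eigenvectorBasis.orthonormal.ne_zero i
      exact tendsto_one_div_sqrt_of_newtonSchulz (hspec hv (hA.mulVec_eigenvectorBasis i)) rfl
        (newtonSchulzStep_iterate_snd_succ _)
    rw [funext hZ_eq, hpd.inv_eq_conjDiag hS.posSemidef hSsq]
    exact (hA.continuous_conjDiag.tendsto _).comp hd_lim

/-- Newton–Schulz convergence: if `A` is symmetric positive definite with
`‖I - A‖ < 1`, then the scalar iteration `z_{k+1} = ½ z_k (3 - a z_k²)`, `z₀ = 1`,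
converges to `a^{-1/2}` for every eigenvalue `a` of `A`, and the matrix iteration
`Y₀ = A, Z₀ = I, T_k = 3I - Z_kY_k, Y_{k+1} = ½Y_kT_k, Z_{k+1} = ½T_kZ_k`
satisfies `Z_k → A^{-1/2} = S⁻¹`, where `S` is the positive-definite square root
of `A`. -/
theorem stmt12 {n : ℕ} (A : Matrix (Fin n) (Fin n) ℝ)
    (hsymm : A.IsSymm) (hpd : A.PosDef) (hnorm : opNorm (1 - A) < 1)
    (S : Matrix (Fin n) (Fin n) ℝ) (hS : S.PosDef) (hSsq : S * S = A) :
    (∀ a : ℝ, Module.End.HasEigenvalue (Matrix.toLin' A) a →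
      ∀ z : ℕ → ℝ, z 0 = 1 → (∀ k, z (k + 1) = (1 / 2) * z k * (3 - a * z k ^ 2)) →
        Tendsto z atTop (nhds (1 / Real.sqrt a))) ∧
    (∀ Y Z : ℕ → Matrix (Fin n) (Fin n) ℝ,
      Y 0 = A → Z 0 = 1 →
      (∀ k, Y (k + 1) =
        (1 / 2 : ℝ) • (Y k * (3 • (1 : Matrix (Fin n) (Fin n) ℝ) - Z k * Y k))) →
      (∀ k, Z (k + 1) =
        (1 / 2 : ℝ) • ((3 • (1 : Matrix (Fin n) (Fin n) ℝ) - Z k * Y k) * Z k)) →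
      Tendsto Z atTop (nhds S⁻¹)) :=
  stmt12_general A hpd hnorm S hS hSsq
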